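/- arXiv:math/9211202 — 4 statements merged into one kernel-verified Lean document; each statement's English description precedes it below -/
import Mathlib

section
/- Let 𝔻 be the Hechler poset and let I ⊆ 𝔻 be a dense subset. Put A := { t ∈ ω^{<ω} : there exists f : ℕ → ℕ with (t,f) ∈ I }. Then every strictly increasing finite sequence t* of natural numbers belongs to R(A); that is, the Baumgartner–Dordal–Shelah rank rk(t*, A) is defined (equivalently, rk(t*, A) < ω₁) for every strictly increasing t* ∈ ω^{<ω}. -/
/-!
Suppose `t*` has no rank. We build a strictly increasing `f` extending `t*`, one value at a
time, so that no sequence extending `t*` and lying above `f` beyond `t*` has a rank; density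
then gives `(u, g) ∈ I` below `(t*, f)`, and `u ∈ A` is such a sequence. The next value of `f`
exists because ranked sequences above `f` whose last entries are unbounded would, by pigeonhole
on the entries between `lh t*` and the last one, produce a shorter ranked sequence above `f`.
-/

/-- A Hechler condition: a pair `(s, f)` where `s` is a finite sequence of naturals,
`f : ℕ → ℕ` is strictly increasing, and `s` is an initial segment of `f`. -/
def HechlerCond (p : List ℕ × (ℕ → ℕ)) : Prop :=
  StrictMono p.2 ∧ ∀ i : Fin p.1.length, p.2 i = p.1.get i

/-- The order on the Hechler poset: `(s, f) ≤ (t, g)` iff `t` is an initial segment of `s`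
and `f(n) ≥ g(n)` for all `n`. -/
def HechlerLe (p q : List ℕ × (ℕ → ℕ)) : Prop :=
  q.1 <+: p.1 ∧ ∀ n, q.2 n ≤ p.2 n

/-- The Baumgartner–Dordal–Shelah rank closure `R(A)`: the smallest set of strictly
increasing finite sequences containing every strictly increasing member of `A`, and
containing `t` whenever there are `m` and strictly increasing sequences `t_k` of length `m`
extending `t` with `t_k(lh t) ≥ k` all lying in `R(A)`.  Membership `t ∈ R(A)` expresses
that the rank `rk(t, A)` is defined (equivalently `rk(t, A) < ω₁`). -/
inductive HechlerRk (A : Set (List ℕ)) : List ℕ → Prop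
  | base {t : List ℕ} (hs : t.Pairwise (· < ·)) (ht : t ∈ A) : HechlerRk A t
  | step {t : List ℕ} (hs : t.Pairwise (· < ·)) (m : ℕ) (hm : t.length < m)
      (tk : ℕ → List ℕ)
      (hsorted : ∀ k, (tk k).Pairwise (· < ·))
      (hlen : ∀ k, (tk k).length = m)
      (hpre : ∀ k, t <+: tk k)
      (hge : ∀ k, k ≤ (tk k).getD t.length 0)
      (hrk : ∀ k, HechlerRk A (tk k)) : HechlerRk A t

open List

lemma List.IsPrefix.getD_eq {v w : List ℕ} (h : v <+: w) {i : ℕ} (hi : i < v.length) :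
    w.getD i 0 = v.getD i 0 := by
  obtain ⟨r, rfl⟩ := h
  exact getD_append _ _ _ _ hi

lemma List.IsPrefix.append_getD_prefix {v w : List ℕ} (h : v <+: w) (hl : v.length < w.length) :
    v ++ [w.getD v.length 0] <+: w := by
  obtain ⟨r, rfl⟩ := h
  cases r with
  | nil => simp at hl
  | cons x r => exact ⟨r, by simp⟩

lemma exists_fiber_unbounded {α : Type*} {S : Set α} {F G : α → ℕ} {b₀ : ℕ}
    (hG : ∀ s ∈ S, G s < b₀) (hF : ∀ b, ∃ s ∈ S, b ≤ F s) :
    ∃ a, ∀ b, ∃ s ∈ S, G s = a ∧ b ≤ F s := by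
  by_contra! h
  choose B hB using h
  obtain ⟨s, hs, hle⟩ := hF ((Finset.range b₀).sup B)
  have hsup : B (G s) ≤ (Finset.range b₀).sup B :=
    Finset.le_sup (Finset.mem_range.2 (hG s hs))
  exact (hle.trans_lt ((hB (G s) s hs rfl).trans_le hsup)).false

lemma HechlerCond.getD_eq {p : List ℕ × (ℕ → ℕ)} (hp : HechlerCond p) {i : ℕ}
    (hi : i < p.1.length) : p.1.getD i 0 = p.2 i := by
  rw [getD_eq_getElem _ _ hi, hp.2 ⟨i, hi⟩, get_eq_getElem]

lemma HechlerCond.pairwise_lt {p : List ℕ × (ℕ → ℕ)} (hp : HechlerCond p) :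
    p.1.Pairwise (· < ·) := by
  refine pairwise_iff_getElem.2 fun i j hi hj hij => ?_
  rw [← getD_eq_getElem _ 0 hi, ← getD_eq_getElem _ 0 hj, hp.getD_eq hi, hp.getD_eq hj]
  exact hp.1 hij

namespace HechlerRk

variable {A : Set (List ℕ)}

lemma of_forall_exists_le {S : Set (List ℕ)} {M : ℕ} {v : List ℕ}
    (hS : ∀ s ∈ S, s.Pairwise (· < ·) ∧ s.length = M ∧ v <+: s ∧ HechlerRk A s)
    (hvM : v.length < M) (hunb : ∀ b, ∃ s ∈ S, b ≤ s.getD v.length 0) : HechlerRk A v := by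
  choose σ hσS hσ using hunb
  have hσ' k := hS _ (hσS k)
  exact step ((hσ' 0).1.sublist (hσ' 0).2.2.1.sublist) M hvM σ (fun k => (hσ' k).1)
    (fun k => (hσ' k).2.1) (fun k => (hσ' k).2.2.1) hσ (fun k => (hσ' k).2.2.2)

theorem exists_prefix_of_unbounded {S : Set (List ℕ)} {M p : ℕ}
    (hS : ∀ s ∈ S, s.Pairwise (· < ·) ∧ s.length = M ∧ HechlerRk A s) (hpM : p < M)
    (hunb : ∀ b, ∃ s ∈ S, b ≤ s.getD p 0) {v : List ℕ} (hvS : ∀ s ∈ S, v <+: s)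
    (hvp : v.length ≤ p) :
    ∃ w, v <+: w ∧ w.length ≤ p ∧ (∃ s ∈ S, w <+: s) ∧ HechlerRk A w := by
  by_cases hv : ∀ b, ∃ s ∈ S, b ≤ s.getD v.length 0
  · obtain ⟨s, hs, -⟩ := hunb 0
    refine ⟨v, prefix_refl v, hvp, ⟨s, hs, hvS s hs⟩, of_forall_exists_le (M := M) ?_ (by omega) hv⟩
    exact fun s hs => ⟨(hS s hs).1, (hS s hs).2.1, hvS s hs, (hS s hs).2.2⟩
  push Not at hv
  obtain ⟨b₀, hb₀⟩ := hv
  have hvp' : v.length < p := by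
    refine lt_of_le_of_ne hvp fun h => ?_
    obtain ⟨s, hs, hle⟩ := hunb b₀
    exact (hb₀ s hs).not_ge (h ▸ hle)
  obtain ⟨a, ha⟩ := exists_fiber_unbounded hb₀ hunb
  have hpre : ∀ s ∈ {s ∈ S | s.getD v.length 0 = a}, v ++ [a] <+: s := by
    rintro s ⟨hs, rfl⟩
    exact (hvS s hs).append_getD_prefix (by rw [(hS s hs).2.1]; omega)
  obtain ⟨w, hvw, hw, ⟨s, ⟨hs, -⟩, hws⟩, hrk⟩ :=
    exists_prefix_of_unbounded (S := {s ∈ S | s.getD v.length 0 = a})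
      (fun s hs => hS s hs.1) hpM (by simpa [and_assoc] using ha) hpre (by simp; omega)
  exact ⟨w, (prefix_append v [a]).trans hvw, hw, ⟨s, hs, hws⟩, hrk⟩
termination_by p - v.length
decreasing_by simp; omega

end HechlerRk

def LiesAbove (t₀ : List ℕ) (f : ℕ → ℕ) (v : List ℕ) : Prop :=
  t₀ <+: v ∧ ∀ i, t₀.length ≤ i → i < v.length → f i ≤ v.getD i 0

lemma LiesAbove.mono {t₀ v : List ℕ} {f g : ℕ → ℕ} (h : LiesAbove t₀ f v)
    (hgf : ∀ i < v.length, g i ≤ f i) : LiesAbove t₀ g v :=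
  ⟨h.1, fun i hi hiv => (hgf i hiv).trans (h.2 i hi hiv)⟩

lemma LiesAbove.of_prefix {t₀ v w : List ℕ} {f : ℕ → ℕ} (h : LiesAbove t₀ f v) (hwv : w <+: v)
    (htw : t₀ <+: w) : LiesAbove t₀ f w :=
  ⟨htw, fun i hi hiw => hwv.getD_eq hiw ▸ h.2 i hi (hiw.trans_le hwv.length_le)⟩

lemma HechlerCond.liesAbove {q : List ℕ × (ℕ → ℕ)} {t₀ : List ℕ} {f : ℕ → ℕ} (hq : HechlerCond q)
    (h : HechlerLe q (t₀, f)) : LiesAbove t₀ f q.1 :=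
  ⟨h.1, fun i _ hi => (hq.getD_eq hi).symm ▸ h.2 i⟩

/-- The admissible values for the entry of `f` after its finite approximation `L`. -/
def killThresholds (A : Set (List ℕ)) (t₀ L : List ℕ) : Set ℕ :=
  {c | ∀ v : List ℕ, v.Pairwise (· < ·) → v.length = L.length + 1 →
    LiesAbove t₀ (L.getD · 0) v → c ≤ v.getD L.length 0 → ¬ HechlerRk A v}

/-- The bound `L.sum + 1` makes `f` strictly increasing. -/
noncomputable def nextEntry (A : Set (List ℕ)) (t₀ L : List ℕ) : ℕ :=
  max (L.sum + 1) (sInf (killThresholds A t₀ L))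

noncomputable def escapeApprox (A : Set (List ℕ)) (t₀ : List ℕ) : ℕ → List ℕ
  | 0 => t₀
  | j + 1 => escapeApprox A t₀ j ++ [nextEntry A t₀ (escapeApprox A t₀ j)]

noncomputable def escapeFun (A : Set (List ℕ)) (t₀ : List ℕ) (n : ℕ) : ℕ :=
  (escapeApprox A t₀ (n + 1)).getD n 0

section Escape

variable {A : Set (List ℕ)} {t₀ L : List ℕ}

lemma nextEntry_mem (h : (killThresholds A t₀ L).Nonempty) :
    nextEntry A t₀ L ∈ killThresholds A t₀ L := fun v hv hl habove hc =>
  Nat.sInf_mem h v hv hl habove ((le_max_right _ _).trans hc)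

lemma lt_nextEntry {x : ℕ} (hx : x ∈ L) : x < nextEntry A t₀ L :=
  (le_sum_of_mem hx).trans_lt (Nat.lt_succ_self _) |>.trans_le (le_max_left _ _)

lemma length_escapeApprox (j : ℕ) : (escapeApprox A t₀ j).length = t₀.length + j := by
  induction j with
  | zero => rfl
  | succ j ih => simp [escapeApprox, ih, Nat.add_assoc]

lemma escapeApprox_prefix_of_le {j k : ℕ} (hjk : j ≤ k) :
    escapeApprox A t₀ j <+: escapeApprox A t₀ k := by
  induction hjk with
  | refl => exact prefix_refl _
  | step _ ih => exact ih.trans (prefix_append _ _)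

lemma getD_escapeApprox {j n : ℕ} (hn : n < (escapeApprox A t₀ j).length) :
    (escapeApprox A t₀ j).getD n 0 = escapeFun A t₀ n := by
  have hk : n < (escapeApprox A t₀ (n + 1)).length := by rw [length_escapeApprox]; omega
  rw [← (escapeApprox_prefix_of_le (le_max_left j (n + 1))).getD_eq hn, escapeFun,
    ← (escapeApprox_prefix_of_le (le_max_right j (n + 1))).getD_eq hk]

lemma getD_escapeApprox_le (j i : ℕ) : (escapeApprox A t₀ j).getD i 0 ≤ escapeFun A t₀ i := by
  rcases lt_or_ge i (escapeApprox A t₀ j).length with hi | hi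
  · exact (getD_escapeApprox hi).le
  · rw [getD_eq_default _ _ hi]
    exact Nat.zero_le _

lemma escapeFun_of_lt {n : ℕ} (hn : n < t₀.length) : escapeFun A t₀ n = t₀.getD n 0 :=
  (getD_escapeApprox (j := 0) hn).symm

lemma escapeFun_length_add (j : ℕ) :
    escapeFun A t₀ (t₀.length + j) = nextEntry A t₀ (escapeApprox A t₀ j) := by
  rw [← getD_escapeApprox (j := j + 1) (by rw [length_escapeApprox]; omega)]
  simp [escapeApprox, length_escapeApprox]

lemma pairwise_escapeApprox (ht₀ : t₀.Pairwise (· < ·)) (j : ℕ) :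
    (escapeApprox A t₀ j).Pairwise (· < ·) := by
  induction j with
  | zero => exact ht₀
  | succ j ih =>
    simp only [escapeApprox, pairwise_append, pairwise_singleton, mem_singleton, true_and]
    exact ⟨ih, fun x hx _ h => h ▸ lt_nextEntry hx⟩

lemma strictMono_escapeFun (ht₀ : t₀.Pairwise (· < ·)) : StrictMono (escapeFun A t₀) := by
  refine strictMono_nat_of_lt_succ fun n => ?_
  have hlen := length_escapeApprox (A := A) (t₀ := t₀) (n + 2)
  rw [← getD_escapeApprox (j := n + 2) (by omega), ← getD_escapeApprox (j := n + 2) (by omega),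
    getD_eq_getElem _ _ (by omega), getD_eq_getElem _ _ (by omega)]
  exact pairwise_iff_getElem.1 (pairwise_escapeApprox ht₀ (n + 2)) _ _ _ _ (Nat.lt_succ_self n)

lemma hechlerCond_escapeFun (ht₀ : t₀.Pairwise (· < ·)) : HechlerCond (t₀, escapeFun A t₀) :=
  ⟨strictMono_escapeFun ht₀, fun i => by
    simp [escapeFun_of_lt i.2]⟩

end Escape

section Unranked

variable {A : Set (List ℕ)} {t₀ : List ℕ}

lemma killThresholds_nonempty (j : ℕ)
    (hshort : ∀ w, w.Pairwise (· < ·) → LiesAbove t₀ (escapeFun A t₀) w →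
      w.length ≤ t₀.length + j → ¬ HechlerRk A w) :
    (killThresholds A t₀ (escapeApprox A t₀ j)).Nonempty := by
  set L := escapeApprox A t₀ j with hL
  have hlen : L.length = t₀.length + j := length_escapeApprox j
  by_contra! hempty
  have hunb : ∀ c, ∃ v ∈ {v : List ℕ | v.Pairwise (· < ·) ∧ v.length = L.length + 1 ∧
      LiesAbove t₀ (L.getD · 0) v ∧ HechlerRk A v}, c ≤ v.getD L.length 0 := by
    intro c
    have hc : c ∉ killThresholds A t₀ L := hempty ▸ Set.notMem_empty c
    simp only [killThresholds, Set.mem_ofPred_eq] at hc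
    push Not at hc
    obtain ⟨v, hv, hvl, habove, hcv, hrk⟩ := hc
    exact ⟨v, ⟨hv, hvl, habove, hrk⟩, hcv⟩
  obtain ⟨w, htw, hwl, ⟨s, ⟨hs, -, habove, -⟩, hws⟩, hrk⟩ :=
    HechlerRk.exists_prefix_of_unbounded (fun s hs => ⟨hs.1, hs.2.1, hs.2.2.2⟩)
      (Nat.lt_succ_self _) hunb (fun s hs => hs.2.2.1.1) (by omega)
  refine hshort w (hs.sublist hws.sublist) ?_ (by omega) hrk
  exact (habove.of_prefix hws htw).mono fun i hi => (getD_escapeApprox (by rw [← hL]; omega)).ge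

theorem not_hechlerRk_of_liesAbove (ht₀ : ¬ HechlerRk A t₀) {v : List ℕ}
    (hv : v.Pairwise (· < ·)) (habove : LiesAbove t₀ (escapeFun A t₀) v) : ¬ HechlerRk A v := by
  induction hn : v.length using Nat.strong_induction_on generalizing v with
  | _ n ih =>
  rcases le_or_gt v.length t₀.length with hle | hlt
  · rwa [← habove.1.eq_of_length (le_antisymm habove.1.length_le hle)]
  obtain ⟨j, hj⟩ : ∃ j, v.length = t₀.length + j + 1 := ⟨v.length - t₀.length - 1, by omega⟩
  have hne := killThresholds_nonempty j fun w hw hwa hwl => ih w.length (by omega) hw hwa rfl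
  refine nextEntry_mem hne v hv (by rw [hj, length_escapeApprox])
    (habove.mono fun i _ => getD_escapeApprox_le j i) ?_
  rw [length_escapeApprox, ← escapeFun_length_add]
  exact habove.2 _ (by omega) (by omega)

end Unranked

/-- Main Lemma (Baumgartner–Dordal, Shelah): if `I` is a dense subset of the Hechler
poset `𝔻` and `A = { t : ∃ f, (t, f) ∈ I }`, then every strictly increasing finite
sequence `t*` has defined rank `rk(t*, A) < ω₁`, i.e. belongs to `R(A)`. -/
theorem hechler_main_lemma (I : Set (List ℕ × (ℕ → ℕ)))
    (hI : ∀ p ∈ I, HechlerCond p)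
    (hdense : ∀ p : List ℕ × (ℕ → ℕ), HechlerCond p → ∃ q ∈ I, HechlerLe q p)
    (A : Set (List ℕ)) (hA : A = {t | ∃ f : ℕ → ℕ, (t, f) ∈ I})
    (tstar : List ℕ) (htstar : tstar.Pairwise (· < ·)) :
    HechlerRk A tstar := by
  by_contra hrk
  obtain ⟨⟨u, g⟩, huI, hle⟩ := hdense _ (hechlerCond_escapeFun (A := A) htstar)
  have hu := hI _ huI
  have huA : u ∈ A := hA ▸ ⟨g, huI⟩
  exact not_hechlerRk_of_liesAbove hrk hu.pairwise_lt (hu.liesAbove hle) (.base hu.pairwise_lt huA)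
end

section
/- Let 𝔻′ be the classical Hechler poset and let I ⊆ 𝔻′ be a dense subset. Put A := { t ∈ ω^{<ω} : there exists f : ℕ → ℕ with (t,f) ∈ I }. Then every t* ∈ Ω belongs to R′(A); that is, the rank rk(t*, A) on 𝔻′ is defined (equivalently, rk(t*, A) < ω₁) for every finite partial function t* from ω to ω. -/
/-- A classical Hechler condition: a pair `(s, f)` where `s` is a finite sequence of
naturals, `f : ℕ → ℕ`, and `s` is an initial segment of `f`. -/
def HechlerCond' (p : List ℕ × (ℕ → ℕ)) : Prop :=
  ∀ i : Fin p.1.length, p.2 i = p.1.get i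

/-- The order on the classical Hechler poset `𝔻′`: `(s, f) ≤ (t, g)` iff `t` is an
initial segment of `s` and `f(n) ≥ g(n)` for all `n`. -/
def HechlerLe' (p q : List ℕ × (ℕ → ℕ)) : Prop :=
  q.1 <+: p.1 ∧ ∀ n, q.2 n ≤ p.2 n

/-- Elements of `Ω`: finite partial functions from `ω` to `ω`, represented as
`ℕ → Option ℕ` with finite domain. -/
def FinitePartial (t : ℕ → Option ℕ) : Prop := {i | t i ≠ none}.Finite

/-- The partial function corresponding to a finite sequence. -/
def listToPartial (s : List ℕ) : ℕ → Option ℕ := fun i => s[i]?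

/-- The rank closure `R′(A)` for the classical Hechler poset: the smallest subset of `Ω`
containing (the partial functions corresponding to) all members of `A`, and containing `t`
whenever there are a finite `M ⊆ ω` properly containing `dom t` and functions
`t_k : M → ω` extending `t`, all in `R′(A)`, with `t_{k₁}(i) ≠ t_{k₂}(i)` for all
`i ∈ M \ dom t` and `k₁ ≠ k₂`.  Membership `t ∈ R′(A)` expresses that the rank
`rk(t, A)` on `𝔻′` is defined (equivalently `rk(t, A) < ω₁`). -/
inductive HechlerRk' (A : Set (List ℕ)) : (ℕ → Option ℕ) → Prop
  | base {s : List ℕ} (hs : s ∈ A) : HechlerRk' A (listToPartial s)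
  | step {t : ℕ → Option ℕ} (ht : FinitePartial t) (M : Finset ℕ)
      (hM : {i | t i ≠ none} ⊂ (M : Set ℕ))
      (tk : ℕ → ℕ → Option ℕ)
      (hdom : ∀ k i, tk k i ≠ none ↔ i ∈ M)
      (hext : ∀ k i, t i ≠ none → tk k i = t i)
      (hdiff : ∀ i ∈ M, t i = none → ∀ k₁ k₂ : ℕ, k₁ ≠ k₂ → tk k₁ i ≠ tk k₂ i)
      (hrk : ∀ k, HechlerRk' A (tk k)) : HechlerRk' A t

/-!
It suffices to give rank to the partial functions coming from sequences `s`: a finite partial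
function is then handled by one closure step, filling its gaps below some `N` with a constant `k`.

If `s` had no rank, build `f̂` extending `s` by recursion, so that no partial function compatible
with `(s, f̂)` and with domain below `n` gets rank when extended at `n` by a value `≥ f̂ n`.
Such a bound exists at each stage: otherwise there are witnesses with unbounded values at `n`;
thinning them to a subsequence that is constant or injective in each coordinate, their common
part gets rank by the closure step, although it is compatible with `(s, f̂)` and lives below `n`,
which the earlier bounds exclude. Finally, density gives `(s', f') ∈ I` below `(s, f̂)`; then
`s' ∈ A` has rank but is compatible with `(s, f̂)`, a contradiction.
-/

open Function Set

section Subsequences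

variable {α : Type*}

def IsConstOrInjAvoiding (a : α) (x : ℕ → α) : Prop :=
  (∀ k, x k = x 0) ∨ (Injective x ∧ ∀ k, x k ≠ a)

theorem IsConstOrInjAvoiding.comp {a : α} {x : ℕ → α} (hx : IsConstOrInjAvoiding a x)
    {φ : ℕ → ℕ} (hφ : Injective φ) : IsConstOrInjAvoiding a (x ∘ φ) := by
  rcases hx with hconst | ⟨hinj, hne⟩
  · exact Or.inl fun k => (hconst (φ k)).trans (hconst (φ 0)).symm
  · exact Or.inr ⟨hinj.comp hφ, fun k => hne (φ k)⟩

theorem exists_injective_isConstOrInjAvoiding (a : α) (x : ℕ → α) :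
    ∃ φ : ℕ → ℕ, Injective φ ∧ IsConstOrInjAvoiding a (x ∘ φ) := by
  by_cases hfib : ∃ c, {k | x k = c}.Infinite
  · obtain ⟨c, hc⟩ := hfib
    refine ⟨fun k => hc.natEmbedding _ k, fun k l h => (hc.natEmbedding _).injective
      (Subtype.ext h), Or.inl fun k => ?_⟩
    exact (hc.natEmbedding _ k).2.trans (hc.natEmbedding _ 0).2.symm
  · push Not at hfib
    have hrange : (range x \ {a}).Infinite := by
      refine Infinite.sdiff (fun hfin => infinite_univ (α := ℕ) ?_) (finite_singleton a)
      simpa using hfin.preimage' fun c _ => hfib c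
    set e := hrange.natEmbedding _
    choose φ hφ using fun k => (e k).2.1
    have hxφ : x ∘ φ = fun k => (e k : α) := funext hφ
    have hinj : Injective (x ∘ φ) := hxφ ▸ Subtype.val_injective.comp e.injective
    exact ⟨φ, hinj.of_comp, Or.inr ⟨hinj, fun k => by simpa [hφ] using (e k).2.2⟩⟩

theorem exists_injective_forall_isConstOrInjAvoiding {ι : Type*} (a : α) (v : ℕ → ι → α)
    (D : Finset ι) :
    ∃ φ : ℕ → ℕ, Injective φ ∧ ∀ i ∈ D, IsConstOrInjAvoiding a fun k => v (φ k) i := by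
  classical
  induction D using Finset.induction_on with
  | empty => exact ⟨id, injective_id, by simp⟩
  | insert i D _ ih =>
    obtain ⟨φ, hφ, hD⟩ := ih
    obtain ⟨ψ, hψ, hi⟩ := exists_injective_isConstOrInjAvoiding a fun k => v (φ k) i
    refine ⟨φ ∘ ψ, hφ.comp hψ, fun j hj => ?_⟩
    rcases Finset.mem_insert.mp hj with rfl | hj
    · exact hi
    · exact (hD j hj).comp hψ

end Subsequences

open Classical in
noncomputable def commonPart (t : ℕ → ℕ → Option ℕ) : ℕ → Option ℕ :=
  fun i => if ∀ k, t k i = t 0 i then t 0 i else none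

section CommonPart

variable {A : Set (List ℕ)} {t : ℕ → ℕ → Option ℕ} {i : ℕ}

theorem commonPart_of_const (h : ∀ k, t k i = t 0 i) : commonPart t i = t 0 i := if_pos h

theorem commonPart_of_not_const (h : ¬ ∀ k, t k i = t 0 i) : commonPart t i = none := if_neg h

theorem commonPart_eq_or (t : ℕ → ℕ → Option ℕ) (i : ℕ) :
    commonPart t i = t 0 i ∨ commonPart t i = none := by
  by_cases h : ∀ k, t k i = t 0 i
  · exact Or.inl (commonPart_of_const h)
  · exact Or.inr (commonPart_of_not_const h)

/-- The closure step of `R′(A)`, with `M` the common domain of the `t k`: the coordinates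
on which `t` is not constant are exactly those where the `t k` differ pairwise. -/
theorem hechlerRk_commonPart (hrk : ∀ k, HechlerRk' A (t k)) (D : Finset ℕ)
    (hD : ∀ k i, t k i ≠ none → i ∈ D)
    (hhom : ∀ i ∈ D, IsConstOrInjAvoiding none fun k => t k i)
    (hne : ∃ n, ¬ ∀ k, t k n = t 0 n) :
    HechlerRk' A (commonPart t) := by
  obtain ⟨n, hn⟩ := hne
  have hvary : ∀ i, ¬ (∀ k, t k i = t 0 i) → Injective (fun k => t k i) ∧ ∀ k, t k i ≠ none := by
    intro i hi
    obtain ⟨k, hk⟩ := not_forall.mp hi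
    have hiD : i ∈ D := by
      by_cases h0 : t 0 i = none
      · exact hD k i (h0 ▸ hk)
      · exact hD 0 i h0
    exact (hhom i hiD).resolve_left hi
  have hdom : ∀ k i, t k i ≠ none ↔ t 0 i ≠ none := by
    intro k i
    by_cases hi : ∀ k, t k i = t 0 i
    · rw [hi k]
    · exact iff_of_true ((hvary i hi).2 k) ((hvary i hi).2 0)
  set M := D.filter fun i => t 0 i ≠ none
  have hmemM : ∀ k i, t k i ≠ none ↔ i ∈ M := fun k i => by
    rw [Finset.mem_filter, hdom k i]
    exact ⟨fun h => ⟨hD 0 i h, h⟩, And.right⟩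
  have hext : ∀ k i, commonPart t i ≠ none → t k i = commonPart t i := by
    intro k i hi
    by_cases hc : ∀ k, t k i = t 0 i
    · rw [commonPart_of_const hc, hc k]
    · exact absurd (commonPart_of_not_const hc) hi
  have hsub : {i | commonPart t i ≠ none} ⊂ (M : Set ℕ) := by
    refine (ssubset_iff_of_subset fun i hi => ?_).mpr ⟨n, ?_, ?_⟩
    · exact (hmemM 0 i).mp (hext 0 i hi ▸ hi)
    · exact (hmemM 0 n).mp ((hvary n hn).2 0)
    · simp [commonPart_of_not_const hn]
  have hdiff : ∀ i ∈ M, commonPart t i = none → ∀ k₁ k₂, k₁ ≠ k₂ → t k₁ i ≠ t k₂ i := by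
    intro i hiM hci k₁ k₂ hne
    by_cases hc : ∀ k, t k i = t 0 i
    · exact absurd ((commonPart_of_const hc).symm.trans hci) (Finset.mem_filter.mp hiM).2
    · exact (hvary i hc).1.ne hne
  exact .step ((Finset.finite_toSet M).subset hsub.subset) M hsub t hmemM hext hdiff hrk

theorem exists_hechlerRk_commonPart (hrk : ∀ k, HechlerRk' A (t k)) (D : Finset ℕ)
    (hD : ∀ k i, t k i ≠ none → i ∈ D) {n : ℕ} (hn : ∀ c, {k | t k n = c}.Finite) :
    ∃ φ : ℕ → ℕ, HechlerRk' A (commonPart (t ∘ φ)) ∧ commonPart (t ∘ φ) n = none := by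
  obtain ⟨φ, hφ, hhom⟩ := exists_injective_forall_isConstOrInjAvoiding none t D
  have hn' : ¬ ∀ k, t (φ k) n = t (φ 0) n := fun h =>
    (hn _).not_infinite (infinite_of_injective_forall_mem hφ h)
  exact ⟨φ, hechlerRk_commonPart (fun k => hrk (φ k)) D (fun k => hD (φ k)) hhom ⟨n, hn'⟩,
    commonPart_of_not_const hn'⟩

end CommonPart

section Domination

variable {A : Set (List ℕ)} {s : List ℕ} {f : ℕ → ℕ} {n : ℕ} {u : ℕ → Option ℕ}

/-- The finite partial functions with domain below `n` that are compatible with the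
Hechler condition `(s, f)`. -/
def Dominated (s : List ℕ) (f : ℕ → ℕ) (n : ℕ) (u : ℕ → Option ℕ) : Prop :=
  (∀ i < s.length, u i = s[i]?) ∧ (∀ i, n ≤ i → u i = none) ∧
    ∀ i v, s.length ≤ i → u i = some v → f i ≤ v

def AvoidsRankFrom (A : Set (List ℕ)) (s : List ℕ) (f : ℕ → ℕ) (n b : ℕ) : Prop :=
  ∀ u, Dominated s f n u → ∀ j, b ≤ j → ¬ HechlerRk' A (update u n (some j))

theorem Dominated.length_le (hu : Dominated s f n u) : s.length ≤ n := by
  by_contra! h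
  have := (hu.1 n h).symm.trans (hu.2.1 n le_rfl)
  simp [List.getElem?_eq_getElem h] at this

theorem Dominated.eq_listToPartial (hu : Dominated s f s.length u) : u = listToPartial s := by
  funext i
  by_cases hi : i < s.length
  · exact hu.1 i hi
  · rw [hu.2.1 i (not_lt.mp hi), listToPartial, List.getElem?_eq_none (not_lt.mp hi)]

theorem Dominated.update_none (hu : Dominated s f (n + 1) u) (hn : s.length ≤ n) :
    Dominated s f n (update u n none) := by
  refine ⟨fun i hi => ?_, fun i hi => ?_, fun i v hi hv => ?_⟩
  · rw [update_of_ne (by omega)]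
    exact hu.1 i hi
  · rcases hi.eq_or_lt with rfl | hi
    · exact update_self ..
    · rw [update_of_ne hi.ne']
      exact hu.2.1 i hi
  · rcases eq_or_ne i n with rfl | hin
    · simp at hv
    · rw [update_of_ne hin] at hv
      exact hu.2.2 i v hi hv

theorem Dominated.congr {g : ℕ → ℕ} (hu : Dominated s f n u) (h : ∀ i < n, f i = g i) :
    Dominated s g n u := by
  refine ⟨hu.1, hu.2.1, fun i v hi hv => ?_⟩
  have hin : i < n := by
    by_contra! hin
    simp [hu.2.1 i hin] at hv
  exact h i hin ▸ hu.2.2 i v hi hv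

theorem avoidsRankFrom_congr {g : ℕ → ℕ} {b : ℕ} (h : ∀ i < n, f i = g i) :
    AvoidsRankFrom A s f n b ↔ AvoidsRankFrom A s g n b :=
  ⟨fun hf u hu => hf u (hu.congr fun i hi => (h i hi).symm),
    fun hg u hu => hg u (hu.congr h)⟩

theorem not_hechlerRk_of_dominated (hs : ¬ HechlerRk' A (listToPartial s))
    (hf : ∀ m < n, AvoidsRankFrom A s f m (f m)) (hu : Dominated s f n u) :
    ¬ HechlerRk' A u := by
  induction n, hu.length_le using Nat.le_induction generalizing u with
  | base => rwa [hu.eq_listToPartial]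
  | succ n hn ih =>
    have hu' := hu.update_none hn
    cases hun : u n with
    | none =>
      rw [← update_eq_self n u, hun]
      exact ih (fun m hm => hf m (by omega)) hu'
    | some v =>
      have := hf n (by omega) _ hu' v (hu.2.2 n v hn hun)
      rwa [update_idem, ← hun, update_eq_self] at this

theorem exists_avoidsRankFrom (hs : ¬ HechlerRk' A (listToPartial s))
    (hf : ∀ m < n, AvoidsRankFrom A s f m (f m)) : ∃ b, AvoidsRankFrom A s f n b := by
  by_contra! h
  simp only [AvoidsRankFrom, not_forall, not_not, exists_prop] at h
  choose U hU J hJ hrk using h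
  set t : ℕ → ℕ → Option ℕ := fun b => update (U b) n (some (J b))
  have htn : ∀ b, t b n = some (J b) := fun b => update_self ..
  have ht : ∀ b i, i ≠ n → t b i = U b i := fun b i hi => update_of_ne hi ..
  have hD : ∀ b i, t b i ≠ none → i ∈ Finset.range (n + 1) := by
    intro b i hi
    by_contra! hni
    rw [Finset.mem_range, not_lt] at hni
    exact hi ((ht b i (by omega)).trans ((hU b).2.1 i (by omega)))
  have hfib : ∀ c, {b | t b n = c}.Finite := fun c =>
    (finite_Iic (c.getD 0)).subset fun b (hb : t b n = c) => by
      rw [htn] at hb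
      subst hb
      exact hJ b
  obtain ⟨φ, hu, hun⟩ := exists_hechlerRk_commonPart (t := t) hrk _ hD hfib
  have hlen := (hU (φ 0)).length_le
  refine not_hechlerRk_of_dominated hs hf ⟨fun i hi => ?_, fun i hi => ?_, fun i v hi hv => ?_⟩ hu
  · have hconst : ∀ b, t b i = s[i]? := fun b => (ht b i (by omega)).trans ((hU b).1 i hi)
    exact (commonPart_of_const (t := t ∘ φ) fun k => (hconst _).trans (hconst _).symm).trans
      (hconst _)
  · rcases hi.eq_or_lt with rfl | hi
    · exact hun
    · rcases commonPart_eq_or (t ∘ φ) i with h | h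
      · rw [h]
        exact (ht _ i hi.ne').trans ((hU _).2.1 i hi.le)
      · exact h
  · have hin : i ≠ n := by
      rintro rfl
      simp [hun] at hv
    rcases commonPart_eq_or (t ∘ φ) i with h | h
    · rw [h, comp_apply, ht _ i hin] at hv
      exact (hU _).2.2 i v hi hv
    · simp [h] at hv

end Domination

/-- The function `f̂` extending `s`: `f̂ n` is chosen, given `f̂` below `n`, so that
`AvoidsRankFrom A s f̂ n (f̂ n)` holds (an arbitrary value if no such bound exists). -/
noncomputable def hechlerBound (A : Set (List ℕ)) (s : List ℕ) : ℕ → ℕ :=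
  Nat.strongRec fun n g =>
    Classical.epsilon (AvoidsRankFrom A s (fun i => if h : i < n then g i h else 0) n)

theorem hechlerBound_eq (A : Set (List ℕ)) (s : List ℕ) (n : ℕ) :
    hechlerBound A s n = Classical.epsilon (AvoidsRankFrom A s (hechlerBound A s) n) := by
  rw [hechlerBound, Nat.strongRec_eq]
  congr 1
  funext b
  exact propext (avoidsRankFrom_congr fun i hi => by simp [hi, hechlerBound])

theorem avoidsRankFrom_hechlerBound {A : Set (List ℕ)} {s : List ℕ}
    (hs : ¬ HechlerRk' A (listToPartial s)) (n : ℕ) :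
    AvoidsRankFrom A s (hechlerBound A s) n (hechlerBound A s n) := by
  induction n using Nat.strong_induction_on with
  | _ n ih =>
    rw [hechlerBound_eq]
    exact Classical.epsilon_spec (exists_avoidsRankFrom hs ih)

theorem dominated_listToPartial_of_hechlerLe {s s' : List ℕ} {f f' : ℕ → ℕ}
    (hc : HechlerCond' (s', f')) (hle : HechlerLe' (s', f') (s, fun i => s.getD i (f i))) :
    Dominated s f s'.length (listToPartial s') := by
  obtain ⟨⟨r, rfl⟩, hf⟩ := hle
  refine ⟨fun i hi => List.getElem?_append_left hi, fun i hi => List.getElem?_eq_none hi,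
    fun i v hi hv => ?_⟩
  obtain ⟨hi', rfl⟩ := List.getElem?_eq_some_iff.mp hv
  have hfi : f i ≤ f' i := by
    have := hf i
    dsimp only at this
    rwa [List.getD_eq_default _ _ hi] at this
  exact hfi.trans_eq (hc ⟨i, hi'⟩)

theorem hechlerRk_listToPartial (I : Set (List ℕ × (ℕ → ℕ))) (hI : ∀ p ∈ I, HechlerCond' p)
    (hdense : ∀ p, HechlerCond' p → ∃ q ∈ I, HechlerLe' q p) (s : List ℕ) :
    HechlerRk' {t | ∃ f, (t, f) ∈ I} (listToPartial s) := by
  by_contra hs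
  set f := hechlerBound {t | ∃ f, (t, f) ∈ I} s
  have hcond : HechlerCond' (s, fun i => s.getD i (f i)) := fun i => List.getD_eq_getElem _ _ i.2
  obtain ⟨⟨s', f'⟩, hq, hle⟩ := hdense _ hcond
  exact not_hechlerRk_of_dominated hs (fun m _ => avoidsRankFrom_hechlerBound hs m)
    (dominated_listToPartial_of_hechlerLe (hI _ hq) hle) (HechlerRk'.base ⟨f', hq⟩)

theorem hechlerRk_of_finitePartial {A : Set (List ℕ)} (hA : ∀ s, HechlerRk' A (listToPartial s))
    {t : ℕ → Option ℕ} (ht : FinitePartial t) : HechlerRk' A t := by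
  obtain ⟨N, hN⟩ := ht.bddAbove
  have hlt : ∀ i, t i ≠ none → i < N + 1 := fun i hi => Nat.lt_succ_of_le (hN hi)
  set tk : ℕ → ℕ → Option ℕ := fun k =>
    listToPartial ((List.range (N + 2)).map fun i => (t i).getD k)
  have htk : ∀ k i, tk k i = if i < N + 2 then some ((t i).getD k) else none := by
    intro k i
    simp only [tk, listToPartial, List.getElem?_map]
    split_ifs with h
    · simp [List.getElem?_range h]
    · simp [List.getElem?_eq_none (l := List.range (N + 2)) (by simpa using h)]
  refine .step ht (Finset.range (N + 2)) ?_ tk ?_ ?_ ?_ fun k => hA _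
  · refine (ssubset_iff_of_subset fun i hi => ?_).mpr ⟨N + 1, by simp, fun h => ?_⟩
    · exact Finset.mem_range.mpr ((hlt i hi).trans (Nat.lt_succ_self _))
    · exact (hlt _ h).false
  · intro k i
    simp [htk]
  · intro k i hi
    obtain ⟨v, hv⟩ := Option.ne_none_iff_exists'.mp hi
    simp [htk, hv, (hlt i hi).trans (Nat.lt_succ_self _)]
  · intro i hi hti k₁ k₂ hne
    simpa [htk, Finset.mem_range.mp hi, hti] using hne

/-- Main Lemma for the classical Hechler poset `𝔻′`: if `I ⊆ 𝔻′` is dense and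
`A = { t : ∃ f, (t, f) ∈ I }`, then every finite partial function `t*` from `ω` to `ω`
has defined rank, i.e. belongs to `R′(A)`. -/
theorem hechler_main_lemma' (I : Set (List ℕ × (ℕ → ℕ)))
    (hI : ∀ p ∈ I, HechlerCond' p)
    (hdense : ∀ p : List ℕ × (ℕ → ℕ), HechlerCond' p → ∃ q ∈ I, HechlerLe' q p)
    (A : Set (List ℕ)) (hA : A = {t | ∃ f : ℕ → ℕ, (t, f) ∈ I})
    (tstar : ℕ → Option ℕ) (htstar : FinitePartial tstar) :
    HechlerRk' A tstar := by
  subst hA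
  exact hechlerRk_of_finitePartial (hechlerRk_listToPartial I hI hdense) htstar
end

section
/- If there exists a Luzin set of cardinality 2^{ℵ₀}, then cov(𝓜) = 2^{ℵ₀}: the least cardinality of a family of meager subsets of ℝ whose union is all of ℝ equals 2^{ℵ₀}. -/
/-!
The singletons form a meagre cover of `ℝ` of size `𝔠`. Conversely, a meagre cover of `ℝ` of
size `κ` cuts the Luzin set `L` into `κ` countable pieces, so `𝔠 = #L ≤ κ * ℵ₀`, which forces
`𝔠 ≤ κ` because `ℵ₀ < 𝔠`.
-/

open Cardinal Set Topology

section

variable {X : Type*} [TopologicalSpace X]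

lemma isMeagre_singleton [T1Space X] (x : X) [(𝓝[≠] x).NeBot] : IsMeagre ({x} : Set X) :=
  (isClosed_singleton.isNowhereDense_iff.mpr (interior_singleton x)).isMeagre

lemma exists_isMeagre_cover_mk_eq [T1Space X] [∀ x : X, (𝓝[≠] x).NeBot] :
    ∃ F : Set (Set X), #F = #X ∧ (∀ M ∈ F, IsMeagre M) ∧ ⋃₀ F = Set.univ := by
  refine ⟨range ({·}), mk_range_eq _ singleton_injective, ?_, by
    rw [sUnion_range, iUnion_of_singleton]⟩
  rintro _ ⟨x, rfl⟩
  exact isMeagre_singleton x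

end

lemma Cardinal.mk_le_mk_mul_aleph0_of_subset_sUnion {α : Type*} {L : Set α} {F : Set (Set α)}
    (hcover : L ⊆ ⋃₀ F) (hcount : ∀ M ∈ F, (L ∩ M).Countable) : #L ≤ #F * ℵ₀ := by
  have hL : L = ⋃ M ∈ F, L ∩ M := by
    rw [← inter_iUnion₂, ← sUnion_eq_biUnion, inter_eq_left.mpr hcover]
  calc #L = #(⋃ M ∈ F, L ∩ M) := by rw [← hL]
    _ ≤ #F * ⨆ M : F, #(L ∩ M.1 : Set α) := mk_biUnion_le _ _
    _ ≤ #F * ℵ₀ := by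
      gcongr
      exact ciSup_le' fun M ↦ (hcount M M.2).le_aleph0

lemma Cardinal.le_of_le_mul_aleph0 {κ μ : Cardinal} (hκ : ℵ₀ < κ) (h : κ ≤ μ * ℵ₀) : κ ≤ μ :=
  (le_max_iff.mp (h.trans (mul_le_max_of_aleph0_le_right le_rfl))).resolve_right hκ.not_ge

lemma mk_le_mk_of_isMeagre_sUnion_eq_univ {X : Type*} [TopologicalSpace X] {L : Set X}
    (hL : ℵ₀ < #L) (hLuzin : ∀ M : Set X, IsMeagre M → (L ∩ M).Countable)
    {F : Set (Set X)} (hF : ∀ M ∈ F, IsMeagre M) (hcover : ⋃₀ F = Set.univ) : #L ≤ #F :=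
  le_of_le_mul_aleph0 hL <| mk_le_mk_mul_aleph0_of_subset_sUnion (hcover ▸ subset_univ L)
    fun M hM ↦ hLuzin M (hF M hM)

theorem luzin_set_continuum_implies_cov_meager_eq_continuum_general (L : Set ℝ)
    (hLuzin : ∀ M : Set ℝ, IsMeagre M → (L ∩ M).Countable)
    (hcard : #L = Cardinal.continuum) :
    sInf {c : Cardinal | ∃ F : Set (Set ℝ), #F = c ∧
        (∀ M ∈ F, IsMeagre M) ∧ ⋃₀ F = Set.univ}
      = Cardinal.continuum := by
  have hsingletons := mk_real ▸ exists_isMeagre_cover_mk_eq (X := ℝ)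
  refine le_antisymm (csInf_le' hsingletons) (le_csInf ⟨_, hsingletons⟩ ?_)
  rintro _ ⟨F, rfl, hF, hcover⟩
  exact hcard ▸
    mk_le_mk_of_isMeagre_sUnion_eq_univ (hcard ▸ aleph0_lt_continuum) hLuzin hF hcover

/-- If there is a Luzin set (an uncountable set of reals whose intersection with every
meager set is countable) of cardinality `2^ℵ₀`, then `cov(𝓜) = 2^ℵ₀`: the least
cardinality of a family of meager subsets of `ℝ` covering `ℝ` equals `2^ℵ₀`. -/
theorem luzin_set_continuum_implies_cov_meager_eq_continuum (L : Set ℝ)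
    (hL : ¬ L.Countable)
    (hLuzin : ∀ M : Set ℝ, IsMeagre M → (L ∩ M).Countable)
    (hcard : #L = Cardinal.continuum) :
    sInf {c : Cardinal | ∃ F : Set (Set ℝ), #F = c ∧
        (∀ M ∈ F, IsMeagre M) ∧ ⋃₀ F = Set.univ}
      = Cardinal.continuum :=
  luzin_set_continuum_implies_cov_meager_eq_continuum_general L hLuzin hcard
end

section
/- Let g : ℕ → ℕ satisfy g(i) ≥ i for all i. For each i, let U_i be the (finite, nonempty) set of all subsets u of the set 2^{g(i)} of binary strings of length g(i) with |u| = 2^{g(i)−i}, equipped with the uniform probability measure μ_i, and let μ be the product probability measure on U = ∏_{i ∈ ω} U_i. Then for every sequence of sets S_i ⊆ 2^{g(i)}, the set { u ∈ U : there are infinitely many i with |S_i| > 4^i and u(i) ∩ S_i = ∅ } has μ-measure zero. -/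
open scoped ENNReal

/-- `U_i`: the set of all subsets `u` of the set `2^{g(i)}` of binary strings of length
`g(i)` with `|u| = 2^{g(i)-i}`. -/
def UComp (g : ℕ → ℕ) (i : ℕ) : Type :=
  {u : Finset (Fin (g i) → Bool) // u.card = 2 ^ (g i - i)}

/-- Each finite factor `U_i` carries the discrete σ-algebra (so the product space
`U = ∏ i, U_i` carries the product σ-algebra). -/
instance (g : ℕ → ℕ) (i : ℕ) : MeasurableSpace (UComp g i) := ⊤

/-! A uniformly random `k`-subset of an `N = k m`-element set misses a fixed `s`-element set with
probability `C(N - s, k) / C(N, k) ≤ (1 - 1/m)^s`, and by Bernoulli's inequality this is at most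
`1/m` once `s ≥ m²`. With `m = 2^i` these probabilities are summable, so Borel–Cantelli applies. -/

open Finset

theorem Nat.card_subtype_card_eq (X : Type*) [Fintype X] (k : ℕ) :
    Nat.card {u : Finset X // u.card = k} = (Fintype.card X).choose k := by
  classical
  rw [Nat.card_eq_fintype_card, Fintype.card_subtype, ← Finset.card_univ, ← card_powersetCard]
  congr 1
  ext u
  simp

theorem Nat.card_subtype_card_eq_inter_eq_empty (X : Type*) [Fintype X] [DecidableEq X] (k : ℕ)
    (S : Finset X) :
    Nat.card {v : {u : Finset X // u.card = k} // v.1 ∩ S = ∅}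
      = (Fintype.card X - S.card).choose k := by
  rw [Nat.card_congr (Equiv.subtypeSubtypeEquivSubtypeInter (fun u : Finset X => u.card = k)
      (fun u => u ∩ S = ∅)), Nat.card_eq_fintype_card,
    Fintype.card_subtype, ← card_compl, ← card_powersetCard]
  congr 1
  ext u
  simp [subset_compl_iff_disjoint_right, disjoint_iff_inter_eq_empty, and_comm]

theorem Nat.sub_mul_le_mul_sub {a k N : ℕ} (ha : a ≤ N) : (a - k) * N ≤ (N - k) * a := by
  rcases le_total a k with hak | hka
  · simp [Nat.sub_eq_zero_of_le hak]
  · have hkN : k ≤ N := hka.trans ha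
    zify [hka, hkN, ha]
    nlinarith

/-- `C(N - s, k) / C(N, k) = ∏_{j < s} (N - j - k) / (N - j)`, and each factor is at most
`(N - k) / N`. -/
theorem Nat.choose_sub_mul_pow_le (N k s : ℕ) :
    (N - s).choose k * N ^ s ≤ N.choose k * (N - k) ^ s := by
  induction s with
  | zero => simp
  | succ s ih =>
    rcases Nat.lt_or_ge s N with hsN | hNs
    · have hstep : (N - (s + 1)).choose k * (N - s) = (N - s).choose k * (N - s - k) := by
        have := Nat.choose_mul_succ_eq (N - (s + 1)) k
        rwa [show N - (s + 1) + 1 = N - s by omega] at this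
      refine Nat.le_of_mul_le_mul_right ?_ (Nat.sub_pos_of_lt hsN)
      calc (N - (s + 1)).choose k * N ^ (s + 1) * (N - s)
          = (N - (s + 1)).choose k * (N - s) * N ^ s * N := by ring
        _ = (N - s).choose k * N ^ s * ((N - s - k) * N) := by rw [hstep]; ring
        _ ≤ N.choose k * (N - k) ^ s * ((N - k) * (N - s)) :=
          Nat.mul_le_mul ih (Nat.sub_mul_le_mul_sub (Nat.sub_le N s))
        _ = N.choose k * (N - k) ^ (s + 1) * (N - s) := by ring
    · rcases Nat.eq_zero_or_pos k with rfl | hk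
      · simp
      · simp [Nat.sub_eq_zero_of_le (Nat.le_succ_of_le hNs), Nat.choose_eq_zero_of_lt hk]

theorem Nat.mul_sub_one_pow_le_pow {m s : ℕ} (hs : (m - 1) ^ 2 ≤ s) : m * (m - 1) ^ s ≤ m ^ s := by
  obtain _ | n := m
  · simp
  obtain _ | t := s
  · simp_all
  simp only [Nat.add_sub_cancel] at hs ⊢
  calc (n + 1) * n ^ (t + 1) = n ^ (t + 1) + n ^ 2 * n ^ t := by ring
    _ ≤ n ^ (t + 1) + (t + 1) * n ^ t := by gcongr
    _ ≤ (n + 1) ^ (t + 1) := by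
      simpa using pow_add_mul_le_add_pow (Nat.zero_le n) (Nat.zero_le (2 * n + 1)) (t + 1)

theorem Nat.mul_choose_sub_le_choose {k m s : ℕ} (hk : 0 < k) (hs : m ^ 2 ≤ s) :
    m * (k * m - s).choose k ≤ (k * m).choose k := by
  rcases Nat.lt_or_ge m 2 with hm | hm
  · interval_cases m
    · simp
    · simp [Nat.choose_eq_zero_of_lt (show k - s < k by omega)]
  have hratio : (k * m - s).choose k * m ^ s ≤ (k * m).choose k * (m - 1) ^ s := by
    have h := Nat.choose_sub_mul_pow_le (k * m) k s
    rw [show k * m - k = k * (m - 1) by rw [Nat.mul_sub, mul_one], mul_pow, mul_pow] at h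
    refine Nat.le_of_mul_le_mul_left ?_ (Nat.pow_pos hk : 0 < k ^ s)
    convert h using 1 <;> ring
  refine Nat.le_of_mul_le_mul_right ?_ (Nat.pow_pos (by omega) : 0 < (m - 1) ^ s)
  calc m * (k * m - s).choose k * (m - 1) ^ s
      = (k * m - s).choose k * (m * (m - 1) ^ s) := by ring
    _ ≤ (k * m - s).choose k * m ^ s :=
      Nat.mul_le_mul_left _ (Nat.mul_sub_one_pow_le_pow (le_trans (by gcongr; omega) hs))
    _ ≤ (k * m).choose k * (m - 1) ^ s := hratio

theorem card_inter_eq_empty_div_card_le_inv {X : Type*} [Fintype X] [DecidableEq X]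
    {k m : ℕ} (S : Finset X) (hX : Fintype.card X = k * m) (hk : 0 < k) (hS : m ^ 2 ≤ S.card) :
    (Nat.card {v : {u : Finset X // u.card = k} // v.1 ∩ S = ∅} : ℝ≥0∞)
      / Nat.card {u : Finset X // u.card = k} ≤ (m : ℝ≥0∞)⁻¹ := by
  rw [Nat.card_subtype_card_eq_inter_eq_empty, Nat.card_subtype_card_eq, hX]
  rcases Nat.eq_zero_or_pos m with rfl | hm
  · simp
  refine ENNReal.div_le_of_le_mul ?_
  rw [← ENNReal.mul_le_iff_le_inv (by simp [hm.ne']) (by simp)]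
  exact_mod_cast Nat.mul_choose_sub_le_choose hk hS

theorem product_measure_infinitely_often_avoid_null_general (g : ℕ → ℕ) (hg : ∀ i, i ≤ g i)
    (μ : MeasureTheory.Measure (∀ i, UComp g i))
    (hprod : ∀ (F : Finset ℕ) (A : ∀ i, Set (UComp g i)),
      μ {u | ∀ i ∈ F, u i ∈ A i}
        = ∏ i ∈ F, (Nat.card (A i) : ℝ≥0∞) / (Nat.card (UComp g i) : ℝ≥0∞))
    (S : ∀ i, Finset (Fin (g i) → Bool)) :
    μ {u | {i | 4 ^ i < (S i).card ∧ (u i).1 ∩ S i = ∅}.Infinite} = 0 := by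
  classical
  have hbound (i : ℕ) : μ {u | 4 ^ i < (S i).card ∧ (u i).1 ∩ S i = ∅} ≤ 2⁻¹ ^ i := by
    by_cases hS : 4 ^ i < (S i).card
    · have hX : Fintype.card (Fin (g i) → Bool) = 2 ^ (g i - i) * 2 ^ i := by
        simp [← pow_add, Nat.sub_add_cancel (hg i)]
      have h4 : (2 ^ i) ^ 2 = 4 ^ i := by rw [← pow_mul, mul_comm, pow_mul]; norm_num
      have hcyl : {u : ∀ j, UComp g j | 4 ^ i < (S i).card ∧ (u i).1 ∩ S i = ∅}
          = {u | ∀ j ∈ ({i} : Finset ℕ), u j ∈ {v : UComp g j | v.1 ∩ S j = ∅}} := by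
        ext u
        simp [hS]
      rw [hcyl, hprod, Finset.prod_singleton, ← ENNReal.inv_pow]
      exact_mod_cast card_inter_eq_empty_div_card_le_inv (S i) hX (by positivity)
        (h4 ▸ hS.le)
    · simp [hS]
  have hsum : ∑' i, μ {u | 4 ^ i < (S i).card ∧ (u i).1 ∩ S i = ∅} ≠ ∞ :=
    ne_top_of_le_ne_top (by simp [ENNReal.tsum_geometric]) (ENNReal.tsum_le_tsum hbound)
  simp_rw [← Nat.frequently_atTop_iff_infinite]
  exact MeasureTheory.measure_setOfPred_frequently_eq_zero hsum

/-- Let `g : ℕ → ℕ` with `g(i) ≥ i`, and let `μ` be the product of the uniform probability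
measures `μ_i` on the finite sets `U_i` (so that the measure of a cylinder
`{u : ∀ i ∈ F, u i ∈ A i}` is `∏_{i ∈ F} |A i| / |U_i|`).  Then for any sets
`S_i ⊆ 2^{g(i)}`, the set of `u ∈ U` such that for infinitely many `i` one has
`|S_i| > 4^i` and `u(i) ∩ S_i = ∅` has `μ`-measure zero. -/
theorem product_measure_infinitely_often_avoid_null (g : ℕ → ℕ) (hg : ∀ i, i ≤ g i)
    (μ : MeasureTheory.Measure (∀ i, UComp g i))
    (hμ : MeasureTheory.IsProbabilityMeasure μ)
    (hprod : ∀ (F : Finset ℕ) (A : ∀ i, Set (UComp g i)),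
      μ {u | ∀ i ∈ F, u i ∈ A i}
        = ∏ i ∈ F, (Nat.card (A i) : ℝ≥0∞) / (Nat.card (UComp g i) : ℝ≥0∞))
    (S : ∀ i, Finset (Fin (g i) → Bool)) :
    μ {u | {i | 4 ^ i < (S i).card ∧ (u i).1 ∩ S i = ∅}.Infinite} = 0 :=
  product_measure_infinitely_often_avoid_null_general g hg μ hprod S
end
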